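/- arXiv:2409.09960 — 3 statements merged into one kernel-verified Lean document; each statement's English description precedes it below -/
import Mathlib

section
/- Let χ, θ, β > 0 with χ + θ + β = 1, let σ > 1, γ > 0, 0 < α < 1, c > 0, v > 0, z > 0, w > 0, ε > 0, r > −1, and let F(h, f) = (γ h^{(σ−1)/σ} + f^{(σ−1)/σ})^{σ/(σ−1)}. Suppose h > 0 and f > 0 satisfy the first-order conditions (1−α) · (ε/(1+r)) · θ · (β/w)^{β/(1−β)} · z^{χ/(1−β)} · F(h,f)^{θ/(1−β) − 1} · (F(h,f)/f)^{1/σ} = c and α · (ε/(1+r)) · θ · (β/w)^{β/(1−β)} · z^{χ/(1−β)} · F(h,f)^{θ/(1−β) − 1} · γ · (F(h,f)/h)^{1/σ} = v. Then h = z · (αεθ/(v(1+r)))^{(θ+χ)/χ} · (β/w)^{β/χ} · γ^{θσ/(χ(σ−1))} · [1 + γ^{−σ} · ((v/c) · (1−α)/α)^{σ−1}]^{θ/(χ(σ−1)) − 1}. -/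
/-- If h, f > 0 satisfy the two incentive-compatible first-order
conditions of the venture-capital-financed project, then
h = z·(αεθ/(v(1+r)))^{(θ+χ)/χ}·(β/w)^{β/χ}·γ^{θσ/(χ(σ−1))}
      ·[1 + γ^{−σ}·((v/c)·(1−α)/α)^{σ−1}]^{θ/(χ(σ−1)) − 1}. -/
theorem stmt_6 (χ θ β σ γ α c v z w ε r : ℝ)
    (hχ : 0 < χ) (hθ : 0 < θ) (hβ : 0 < β) (hsum : χ + θ + β = 1)
    (hσ : 1 < σ) (hγ : 0 < γ) (hα0 : 0 < α) (hα1 : α < 1)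
    (hc : 0 < c) (hv : 0 < v) (hz : 0 < z) (hw : 0 < w) (hε : 0 < ε) (hr : -1 < r)
    (F : ℝ → ℝ → ℝ)
    (hF : ∀ h f : ℝ, F h f =
      (γ * h ^ ((σ - 1) / σ) + f ^ ((σ - 1) / σ)) ^ (σ / (σ - 1)))
    (h f : ℝ) (hh : 0 < h) (hf : 0 < f)
    (foc_e : (1 - α) * (ε / (1 + r)) * θ * (β / w) ^ (β / (1 - β)) * z ^ (χ / (1 - β))
        * F h f ^ (θ / (1 - β) - 1) * (F h f / f) ^ (1 / σ) = c)
    (foc_v : α * (ε / (1 + r)) * θ * (β / w) ^ (β / (1 - β)) * z ^ (χ / (1 - β))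
        * F h f ^ (θ / (1 - β) - 1) * γ * (F h f / h) ^ (1 / σ) = v) :
    h = z * (α * ε * θ / (v * (1 + r))) ^ ((θ + χ) / χ) * (β / w) ^ (β / χ)
        * γ ^ (θ * σ / (χ * (σ - 1)))
        * (1 + γ ^ (-σ) * ((v / c) * (1 - α) / α) ^ (σ - 1)) ^ (θ / (χ * (σ - 1)) - 1) := by
  have hr1 : (0:ℝ) < 1 + r := by linarith
  have hσ0 : (0:ℝ) < σ := by linarith
  have hσ1 : (0:ℝ) < σ - 1 := by linarith
  have hσne : σ ≠ 0 := hσ0.ne'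
  have hσ1ne : σ - 1 ≠ 0 := hσ1.ne'
  have h1α : (0:ℝ) < 1 - α := by linarith
  have hχθ : (0:ℝ) < χ + θ := by linarith
  have hχθne : χ + θ ≠ 0 := hχθ.ne'
  have hχne : χ ≠ 0 := hχ.ne'
  have h1β : 1 - β = χ + θ := by linarith
  rw [h1β] at foc_e foc_v
  have hΦ : 0 < F h f := by rw [hF]; positivity
  have hQP : 0 < ε / (1 + r) := div_pos hε hr1
  have hPw : 0 < β / w := div_pos hβ hw
  set t : ℝ := v * (1 - α) / (c * α * γ) with ht_def
  have ht : 0 < t := by rw [ht_def]; positivity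
  -- split the venture FOC power
  have hsplit : (F h f / h) ^ (1 / σ) = (F h f / f) ^ (1 / σ) * (f / h) ^ (1 / σ) := by
    rw [← Real.mul_rpow (div_pos hΦ hf).le (div_pos hf hh).le]
    congr 1
    field_simp
  have key : v * (1 - α) = c * (α * γ * ((f / h) ^ (1 / σ))) := by
    rw [← foc_e, ← foc_v, hsplit]; ring
  have hratio : (f / h) ^ (1 / σ) = t := by
    rw [ht_def, eq_div_iff (by positivity : c * α * γ ≠ 0)]
    linear_combination -key
  have hfh : f = h * t ^ σ := by
    have h1 : ((f / h) ^ (1 / σ)) ^ σ = t ^ σ := by rw [hratio]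
    rw [← Real.rpow_mul (div_pos hf hh).le, one_div,
      inv_mul_cancel₀ hσne, Real.rpow_one] at h1
    have h2 := (div_eq_iff hh.ne').mp h1
    rw [h2]; ring
  set A : ℝ := 1 + γ ^ (-σ) * ((v / c) * (1 - α) / α) ^ (σ - 1) with hA_def
  have hA : 0 < A := by rw [hA_def]; positivity
  set B : ℝ := γ * A with hB_def
  have hB : 0 < B := by rw [hB_def]; positivity
  have hγt : (v / c) * (1 - α) / α = γ * t := by
    rw [ht_def]; field_simp
  have h1 : γ ^ (-σ) * ((v / c) * (1 - α) / α) ^ (σ - 1) = t ^ (σ - 1) / γ := by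
    rw [hγt, Real.mul_rpow hγ.le ht.le,
      show γ ^ (-σ) * (γ ^ (σ - 1) * t ^ (σ - 1))
        = γ ^ (-σ) * γ ^ (σ - 1) * t ^ (σ - 1) by ring,
      ← Real.rpow_add hγ, show -σ + (σ - 1) = (-1 : ℝ) by ring, Real.rpow_neg_one]
    ring
  have htσ : γ + t ^ (σ - 1) = B := by
    rw [hB_def, hA_def, h1, mul_add, mul_one, mul_div_cancel₀ _ hγ.ne']
  have hfpow : f ^ ((σ - 1) / σ) = h ^ ((σ - 1) / σ) * t ^ (σ - 1) := by
    rw [hfh, Real.mul_rpow hh.le (Real.rpow_pos_of_pos ht σ).le, ← Real.rpow_mul ht.le,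
      show σ * ((σ - 1) / σ) = σ - 1 by field_simp]
  have hΦeq : F h f = h * B ^ (σ / (σ - 1)) := by
    rw [hF, hfpow,
      show γ * h ^ ((σ - 1) / σ) + h ^ ((σ - 1) / σ) * t ^ (σ - 1)
        = h ^ ((σ - 1) / σ) * (γ + t ^ (σ - 1)) by ring, htσ,
      Real.mul_rpow (Real.rpow_pos_of_pos hh _).le hB.le, ← Real.rpow_mul hh.le,
      show (σ - 1) / σ * (σ / (σ - 1)) = (1:ℝ) by field_simp, Real.rpow_one]
  have hFhpow : (F h f / h) ^ (1 / σ) = B ^ (1 / (σ - 1)) := by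
    rw [hΦeq, mul_comm, mul_div_assoc, div_self hh.ne', mul_one, ← Real.rpow_mul hB.le,
      show σ / (σ - 1) * (1 / σ) = 1 / (σ - 1) by field_simp]
  have hFpow : F h f ^ (θ / (χ + θ) - 1)
      = h ^ (θ / (χ + θ) - 1) * B ^ (σ / (σ - 1) * (θ / (χ + θ) - 1)) := by
    rw [hΦeq, Real.mul_rpow hh.le (Real.rpow_pos_of_pos hB _).le, ← Real.rpow_mul hB.le]
  have foc2 : α * (ε / (1 + r)) * θ * (β / w) ^ (β / (χ + θ)) * z ^ (χ / (χ + θ))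
      * h ^ (θ / (χ + θ) - 1) * B ^ (σ / (σ - 1) * (θ / (χ + θ) - 1)) * γ
      * B ^ (1 / (σ - 1)) = v := by
    rw [← foc_v, hFpow, hFhpow]; ring
  have hBlog : Real.log B = Real.log γ + Real.log A := by
    rw [hB_def]; exact Real.log_mul hγ.ne' hA.ne'
  have c2 : 0 < α * (ε / (1 + r)) := mul_pos hα0 hQP
  have c3 : 0 < α * (ε / (1 + r)) * θ := mul_pos c2 hθ
  have c4 := mul_pos c3 (Real.rpow_pos_of_pos hPw (β / (χ + θ)))
  have c5 := mul_pos c4 (Real.rpow_pos_of_pos hz (χ / (χ + θ)))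
  have c6 := mul_pos c5 (Real.rpow_pos_of_pos hh (θ / (χ + θ) - 1))
  have c7 := mul_pos c6 (Real.rpow_pos_of_pos hB (σ / (σ - 1) * (θ / (χ + θ) - 1)))
  have c8 := mul_pos c7 hγ
  have hlog : Real.log α + (Real.log ε - Real.log (1 + r)) + Real.log θ
      + (β / (χ + θ)) * Real.log (β / w) + (χ / (χ + θ)) * Real.log z
      + (θ / (χ + θ) - 1) * Real.log h
      + (σ / (σ - 1) * (θ / (χ + θ) - 1)) * (Real.log γ + Real.log A)
      + Real.log γ + (1 / (σ - 1)) * (Real.log γ + Real.log A) = Real.log v := by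
    rw [← foc2,
      Real.log_mul c8.ne' (Real.rpow_pos_of_pos hB (1 / (σ - 1))).ne',
      Real.log_mul c7.ne' hγ.ne',
      Real.log_mul c6.ne' (Real.rpow_pos_of_pos hB (σ / (σ - 1) * (θ / (χ + θ) - 1))).ne',
      Real.log_mul c5.ne' (Real.rpow_pos_of_pos hh (θ / (χ + θ) - 1)).ne',
      Real.log_mul c4.ne' (Real.rpow_pos_of_pos hz (χ / (χ + θ))).ne',
      Real.log_mul c3.ne' (Real.rpow_pos_of_pos hPw (β / (χ + θ))).ne',
      Real.log_mul c2.ne' hθ.ne',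
      Real.log_mul hα0.ne' hQP.ne',
      Real.log_div hε.ne' hr1.ne',
      Real.log_rpow hPw, Real.log_rpow hz, Real.log_rpow hh,
      Real.log_rpow hB, Real.log_rpow hB, hBlog]
  have hCpos : 0 < α * ε * θ / (v * (1 + r)) :=
    div_pos (by positivity) (mul_pos hv hr1)
  have r2 : 0 < z * (α * ε * θ / (v * (1 + r))) ^ ((θ + χ) / χ) :=
    mul_pos hz (Real.rpow_pos_of_pos hCpos _)
  have r3 := mul_pos r2 (Real.rpow_pos_of_pos hPw (β / χ))
  have r4 := mul_pos r3 (Real.rpow_pos_of_pos hγ (θ * σ / (χ * (σ - 1))))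
  have r5 := mul_pos r4 (Real.rpow_pos_of_pos hA (θ / (χ * (σ - 1)) - 1))
  rw [← Real.exp_log hh, ← Real.exp_log r5]
  congr 1
  rw [Real.log_mul r4.ne' (Real.rpow_pos_of_pos hA (θ / (χ * (σ - 1)) - 1)).ne',
    Real.log_mul r3.ne' (Real.rpow_pos_of_pos hγ (θ * σ / (χ * (σ - 1)))).ne',
    Real.log_mul r2.ne' (Real.rpow_pos_of_pos hPw (β / χ)).ne',
    Real.log_mul hz.ne' (Real.rpow_pos_of_pos hCpos ((θ + χ) / χ)).ne',
    Real.log_rpow hCpos, Real.log_rpow hPw, Real.log_rpow hγ, Real.log_rpow hA,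
    Real.log_div (by positivity) (mul_pos hv hr1).ne',
    Real.log_mul (mul_pos hα0 hε).ne' hθ.ne',
    Real.log_mul hα0.ne' hε.ne',
    Real.log_mul hv.ne' hr1.ne']
  have hstep : (1 - θ / (χ + θ)) * Real.log h
      = Real.log α + (Real.log ε - Real.log (1 + r)) + Real.log θ
        + β / (χ + θ) * Real.log (β / w) + χ / (χ + θ) * Real.log z
        + σ / (σ - 1) * (θ / (χ + θ) - 1) * (Real.log γ + Real.log A)
        + Real.log γ + 1 / (σ - 1) * (Real.log γ + Real.log A) - Real.log v := by
    linear_combination -hlog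
  have hco : (1:ℝ) - θ / (χ + θ) = χ / (χ + θ) := by field_simp; ring
  have hLh : Real.log h
      = (Real.log α + (Real.log ε - Real.log (1 + r)) + Real.log θ
        + β / (χ + θ) * Real.log (β / w) + χ / (χ + θ) * Real.log z
        + σ / (σ - 1) * (θ / (χ + θ) - 1) * (Real.log γ + Real.log A)
        + Real.log γ + 1 / (σ - 1) * (Real.log γ + Real.log A) - Real.log v)
        / (χ / (χ + θ)) := by
    rw [eq_div_iff (by positivity : χ / (χ + θ) ≠ 0)]
    linear_combination hstep - Real.log h * hco
  rw [hLh]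
  field_simp
  ring
end

section
/- Let χ, θ, β > 0 with χ + θ + β = 1, σ > 1, γ > 0, 0 < α < 1, v > 0, z > 0, w > 0, ε > 0, r > −1, and assume θ/χ < σ − 1. Define h(c) = z · (αεθ/(v(1+r)))^{(θ+χ)/χ} · (β/w)^{β/χ} · γ^{θσ/(χ(σ−1))} · [1 + γ^{−σ} · ((v/c) · (1−α)/α)^{σ−1}]^{θ/(χ(σ−1)) − 1} for c > 0. Then h is strictly increasing in c on (0, ∞). -/
/-- Under θ/χ < σ − 1, the venture capitalist's optimal effort h(c) is
strictly increasing in the entrepreneur's effort cost c on (0, ∞). -/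
theorem stmt_8 (χ θ β σ γ α v z w ε r : ℝ)
    (hχ : 0 < χ) (hθ : 0 < θ) (hβ : 0 < β) (hsum : χ + θ + β = 1)
    (hσ : 1 < σ) (hγ : 0 < γ) (hα0 : 0 < α) (hα1 : α < 1)
    (hv : 0 < v) (hz : 0 < z) (hw : 0 < w) (hε : 0 < ε) (hr : -1 < r)
    (hcond : θ / χ < σ - 1)
    (h : ℝ → ℝ)
    (hdef : ∀ c : ℝ, h c =
      z * (α * ε * θ / (v * (1 + r))) ^ ((θ + χ) / χ) * (β / w) ^ (β / χ)
        * γ ^ (θ * σ / (χ * (σ - 1)))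
        * (1 + γ ^ (-σ) * ((v / c) * (1 - α) / α) ^ (σ - 1)) ^ (θ / (χ * (σ - 1)) - 1)) :
    StrictMonoOn h (Set.Ioi (0 : ℝ)) := by
  intro c₁ hc₁ c₂ hc₂ hlt
  simp only [Set.mem_Ioi] at hc₁ hc₂
  rw [hdef c₁, hdef c₂]
  have hK : 0 < z * (α * ε * θ / (v * (1 + r))) ^ ((θ + χ) / χ) * (β / w) ^ (β / χ)
      * γ ^ (θ * σ / (χ * (σ - 1))) := by
    have h1r : 0 < 1 + r := by linarith
    have : 0 < α * ε * θ / (v * (1 + r)) := by positivity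
    positivity
  have hα' : 0 < 1 - α := by linarith
  have hσ' : 0 < σ - 1 := by linarith
  -- inner base decreasing
  have hbase : (v / c₂) * (1 - α) / α < (v / c₁) * (1 - α) / α := by
    have : v / c₂ < v / c₁ := div_lt_div_of_pos_left hv hc₁ hlt
    have h2 : 0 < (1 - α) / α := by positivity
    calc (v / c₂) * (1 - α) / α = (v / c₂) * ((1 - α) / α) := by ring
      _ < (v / c₁) * ((1 - α) / α) := by exact mul_lt_mul_of_pos_right this h2
      _ = (v / c₁) * (1 - α) / α := by ring
  have hbase2 : 0 < (v / c₂) * (1 - α) / α := by positivity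
  have hpow : ((v / c₂) * (1 - α) / α) ^ (σ - 1) < ((v / c₁) * (1 - α) / α) ^ (σ - 1) :=
    Real.rpow_lt_rpow hbase2.le hbase hσ'
  have hγσ : (0:ℝ) < γ ^ (-σ) := Real.rpow_pos_of_pos hγ _
  have hinner : 1 + γ ^ (-σ) * ((v / c₂) * (1 - α) / α) ^ (σ - 1)
      < 1 + γ ^ (-σ) * ((v / c₁) * (1 - α) / α) ^ (σ - 1) := by
    have := mul_lt_mul_of_pos_left hpow hγσ
    linarith
  have hinnerpos : 0 < 1 + γ ^ (-σ) * ((v / c₂) * (1 - α) / α) ^ (σ - 1) := by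
    have : 0 < ((v / c₂) * (1 - α) / α) ^ (σ - 1) := Real.rpow_pos_of_pos hbase2 _
    nlinarith
  have hexp : θ / (χ * (σ - 1)) - 1 < 0 := by
    have : θ / (χ * (σ - 1)) < 1 := by
      rw [div_lt_one (by positivity)]
      calc θ = (θ / χ) * χ := by field_simp
        _ < (σ - 1) * χ := by exact mul_lt_mul_of_pos_right hcond hχ
        _ = χ * (σ - 1) := by ring
    linarith
  have hfinal : (1 + γ ^ (-σ) * ((v / c₂) * (1 - α) / α) ^ (σ - 1)) ^ (θ / (χ * (σ - 1)) - 1)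
      > (1 + γ ^ (-σ) * ((v / c₁) * (1 - α) / α) ^ (σ - 1)) ^ (θ / (χ * (σ - 1)) - 1) :=
    Real.rpow_lt_rpow_of_neg hinnerpos hinner hexp
  exact mul_lt_mul_of_pos_left hfinal hK
end

section
/- Let χ, θ, β > 0 with χ + θ + β = 1, σ > 1, γ > 0, 0 < α < 1, c > 0, z > 0, w > 0, ε > 0, r > −1, and assume θ/χ < σ − 1. Define h(v) = z · (αεθ/(v(1+r)))^{(θ+χ)/χ} · (β/w)^{β/χ} · γ^{θσ/(χ(σ−1))} · [1 + γ^{−σ} · ((v/c) · (1−α)/α)^{σ−1}]^{θ/(χ(σ−1)) − 1} for v > 0. Then h is strictly decreasing in v on (0, ∞). -/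
/-- Under θ/χ < σ − 1, the venture capitalist's optimal effort h(v) is
strictly decreasing in the shadow cost v on (0, ∞). -/
theorem stmt_9 (χ θ β σ γ α c z w ε r : ℝ)
    (hχ : 0 < χ) (hθ : 0 < θ) (hβ : 0 < β) (hsum : χ + θ + β = 1)
    (hσ : 1 < σ) (hγ : 0 < γ) (hα0 : 0 < α) (hα1 : α < 1)
    (hc : 0 < c) (hz : 0 < z) (hw : 0 < w) (hε : 0 < ε) (hr : -1 < r)
    (hcond : θ / χ < σ - 1)
    (h : ℝ → ℝ)
    (hdef : ∀ v : ℝ, h v =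
      z * (α * ε * θ / (v * (1 + r))) ^ ((θ + χ) / χ) * (β / w) ^ (β / χ)
        * γ ^ (θ * σ / (χ * (σ - 1)))
        * (1 + γ ^ (-σ) * ((v / c) * (1 - α) / α) ^ (σ - 1)) ^ (θ / (χ * (σ - 1)) - 1)) :
    StrictAntiOn h (Set.Ioi (0 : ℝ)) := by
  intro x hx y hy hxy
  simp only [Set.mem_Ioi] at hx hy
  rw [hdef x, hdef y]
  have hr1 : (0:ℝ) < 1 + r := by linarith
  have hσ1 : (0:ℝ) < σ - 1 := by linarith
  have hα' : (0:ℝ) < 1 - α := by linarith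
  have ha : (0:ℝ) < (θ + χ) / χ := by positivity
  have he : θ / (χ * (σ - 1)) - 1 < 0 := by
    have h1 : θ / (χ * (σ - 1)) < 1 := by
      rw [div_lt_one (by positivity)]
      calc θ = (θ / χ) * χ := by field_simp
        _ < (σ - 1) * χ := mul_lt_mul_of_pos_right hcond hχ
        _ = χ * (σ - 1) := by ring
    linarith
  -- first factor comparison
  have hA : α * ε * θ / (y * (1 + r)) < α * ε * θ / (x * (1 + r)) := by
    apply div_lt_div_of_pos_left (by positivity) (by positivity)
    exact mul_lt_mul_of_pos_right hxy hr1
  have hA' : (α * ε * θ / (y * (1 + r))) ^ ((θ + χ) / χ)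
      < (α * ε * θ / (x * (1 + r))) ^ ((θ + χ) / χ) :=
    Real.rpow_lt_rpow (by positivity) hA ha
  -- second factor comparison
  have hbase : (x / c) * (1 - α) / α < (y / c) * (1 - α) / α := by gcongr
  have hin : 1 + γ ^ (-σ) * ((x / c) * (1 - α) / α) ^ (σ - 1)
      < 1 + γ ^ (-σ) * ((y / c) * (1 - α) / α) ^ (σ - 1) := by
    have := Real.rpow_lt_rpow (by positivity) hbase hσ1
    have hg : (0:ℝ) < γ ^ (-σ) := Real.rpow_pos_of_pos hγ _
    nlinarith
  have hD' : (1 + γ ^ (-σ) * ((y / c) * (1 - α) / α) ^ (σ - 1)) ^ (θ / (χ * (σ - 1)) - 1)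
      < (1 + γ ^ (-σ) * ((x / c) * (1 - α) / α) ^ (σ - 1)) ^ (θ / (χ * (σ - 1)) - 1) :=
    Real.rpow_lt_rpow_of_neg (by positivity) hin he
  have hApos : (0:ℝ) < (α * ε * θ / (y * (1 + r))) ^ ((θ + χ) / χ) := by positivity
  have hDpos : (0:ℝ) < (1 + γ ^ (-σ) * ((y / c) * (1 - α) / α) ^ (σ - 1))
      ^ (θ / (χ * (σ - 1)) - 1) := by positivity
  have hC : (0:ℝ) < z * (β / w) ^ (β / χ) * γ ^ (θ * σ / (χ * (σ - 1))) := by positivity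
  calc z * (α * ε * θ / (y * (1 + r))) ^ ((θ + χ) / χ) * (β / w) ^ (β / χ)
        * γ ^ (θ * σ / (χ * (σ - 1)))
        * (1 + γ ^ (-σ) * ((y / c) * (1 - α) / α) ^ (σ - 1)) ^ (θ / (χ * (σ - 1)) - 1)
      = (z * (β / w) ^ (β / χ) * γ ^ (θ * σ / (χ * (σ - 1)))) *
        ((α * ε * θ / (y * (1 + r))) ^ ((θ + χ) / χ) *
         (1 + γ ^ (-σ) * ((y / c) * (1 - α) / α) ^ (σ - 1)) ^ (θ / (χ * (σ - 1)) - 1)) := by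
        ring
    _ < (z * (β / w) ^ (β / χ) * γ ^ (θ * σ / (χ * (σ - 1)))) *
        ((α * ε * θ / (x * (1 + r))) ^ ((θ + χ) / χ) *
         (1 + γ ^ (-σ) * ((x / c) * (1 - α) / α) ^ (σ - 1)) ^ (θ / (χ * (σ - 1)) - 1)) := by
        exact mul_lt_mul_of_pos_left
          (mul_lt_mul'' hA' hD' hApos.le hDpos.le) hC
    _ = z * (α * ε * θ / (x * (1 + r))) ^ ((θ + χ) / χ) * (β / w) ^ (β / χ)
        * γ ^ (θ * σ / (χ * (σ - 1)))
        * (1 + γ ^ (-σ) * ((x / c) * (1 - α) / α) ^ (σ - 1)) ^ (θ / (χ * (σ - 1)) - 1) := by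
        ring
end
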